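/- Let X be a real Banach space, A ⊆ X a bounded set, and N ∈ ℕ. If D ∈ Δ_N(A), then the Kuratowski measure of non-compactness of D satisfies α(D) ≥ δ_{2N}(A). -/

import Mathlib

open Set Metric Bornology

variable {X : Type*} [NormedAddCommGroup X] [NormedSpace ℝ X] [CompleteSpace X]

/-- The set `(A - x) ∩ (x - A) = {d | x + d ∈ A ∧ x - d ∈ A}`. -/
def symmAt (A : Set X) (x : X) : Set X := {d | x + d ∈ A ∧ x - d ∈ A}

/-- The symmetrized set of `A` with respect to a family of points:
`⋂ i, (A - x i) ∩ (x i - A)`. -/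
def symmSet {ι : Type*} (A : Set X) (x : ι → X) : Set X := ⋂ i, symmAt A (x i)

/-- `Δ_N(A)`: the family of all symmetrized sets of `A` with respect to `N` points of `A`. -/
def DeltaFam (A : Set X) (N : ℕ) : Set (Set X) :=
  {D | ∃ x : Fin N → X, (∀ n, x n ∈ A) ∧ D = symmSet A x}

/-- `δ₀(A) = diam(A)/2`. -/
noncomputable def delta0 (A : Set X) : ℝ := diam A / 2

/-- `δ_N(A) = inf{δ₀(D) : D ∈ Δ_N(A)}`. -/
noncomputable def deltaN (A : Set X) (N : ℕ) : ℝ := sInf (delta0 '' DeltaFam A N)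

/-- `δ_∞(A) = lim_N δ_N(A)`, which equals the infimum since the sequence is
decreasing and bounded below. -/
noncomputable def deltaInf (A : Set X) : ℝ := ⨅ N : ℕ, deltaN A (N + 1)

/-- The Kuratowski measure of non-compactness:
`α(S) = inf{ε > 0 : S is covered by finitely many balls of radius ε}`. -/
noncomputable def kuratowski (S : Set X) : ℝ :=
  sInf {ε : ℝ | 0 < ε ∧ ∃ t : Finset X, S ⊆ ⋃ c ∈ t, closedBall c ε}

/-!
For `d ∈ D = ⋂ₙ (A - xₙ) ∩ (xₙ - A)`, the set `(D - d) ∩ (d - D)` is the symmetrized set of `A`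
with respect to the `2N` points `xₙ ± d`, so its diameter is at least `2 δ_{2N}(A)`: every point of
`D` is the midpoint of a chord of `D` of length almost `2 δ_{2N}(A)`.

Such a set cannot be covered by finitely many balls of a smaller radius `ε`. The span of the centres
carries a nonnegative strongly convex `Φ` (a Euclidean norm squared). Let `g d` be the infimum of `Φ`
over the points of the span within `ε` of `d`. Midpoints of such points near the two ends of a long
chord through `d` are within `ε` of `d`, so `g` grows by a fixed amount from `d` to one end of the
chord, which is impossible since `g` is bounded on `D` by the values of `Φ` at the centres.
-/

section Symmetrization

variable {V : Type*} [NormedAddCommGroup V] {ι : Type*} {A : Set V}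

theorem mem_symmSet {x : ι → V} {d : V} : d ∈ symmSet A x ↔ ∀ i, x i + d ∈ A ∧ x i - d ∈ A := by
  simp [symmSet, symmAt]

theorem zero_mem_symmSet {x : ι → V} (hx : ∀ i, x i ∈ A) : (0 : V) ∈ symmSet A x :=
  mem_symmSet.2 fun i => by simpa using hx i

theorem isBounded_symmAt (hA : IsBounded A) (x : V) : IsBounded (symmAt A x) := by
  obtain ⟨C, hC⟩ := isBounded_iff_forall_norm_le.1 hA
  refine isBounded_iff_forall_norm_le.2 ⟨C + ‖x‖, fun d hd => ?_⟩
  calc ‖d‖ = ‖(x + d) - x‖ := by rw [add_sub_cancel_left]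
    _ ≤ ‖x + d‖ + ‖x‖ := norm_sub_le _ _
    _ ≤ C + ‖x‖ := by gcongr; exact hC _ hd.1

theorem isBounded_symmSet [Nonempty ι] (hA : IsBounded A) (x : ι → V) :
    IsBounded (symmSet A x) :=
  (isBounded_symmAt hA (x (Classical.arbitrary ι))).subset (iInter_subset _ _)

theorem symmSet_comp {ι' : Type*} (x : ι → V) {f : ι' → ι} (hf : f.Surjective) :
    symmSet A (x ∘ f) = symmSet A x :=
  hf.iInter_comp fun i => symmAt A (x i)

theorem symmAt_symmSet (x : ι → V) (d : V) :
    symmAt (symmSet A x) d = symmSet A (Sum.elim (fun i => x i + d) (fun i => x i - d)) := by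
  ext e
  simp only [symmAt, mem_ofPred_eq, mem_symmSet, Sum.forall, Sum.elim_inl, Sum.elim_inr]
  simp only [← add_assoc, ← sub_sub, ← add_sub_assoc, ← sub_add, forall_and]
  tauto

theorem symmAt_mem_deltaFam {N : ℕ} {D : Set V} (hD : D ∈ DeltaFam A N) {d : V} (hd : d ∈ D) :
    symmAt D d ∈ DeltaFam A (2 * N) := by
  obtain ⟨x, hx, rfl⟩ := hD
  refine ⟨Sum.elim (fun i => x i + d) (fun i => x i - d) ∘ finSumFinEquiv.symm ∘
    finCongr (two_mul N), fun n => ?_, ?_⟩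
  · have hmem : ∀ s, Sum.elim (fun i => x i + d) (fun i => x i - d) s ∈ A :=
      Sum.forall.2 ⟨fun i => (mem_symmSet.1 hd i).1, fun i => (mem_symmSet.1 hd i).2⟩
    exact hmem _
  · rw [symmSet_comp _ (finSumFinEquiv.symm.surjective.comp (finCongr (two_mul N)).surjective),
      symmAt_symmSet]

theorem deltaN_le_delta0 {D : Set V} {N : ℕ} (hD : D ∈ DeltaFam A N) : deltaN A N ≤ delta0 D :=
  csInf_le ⟨0, by rintro _ ⟨S, -, rfl⟩; exact div_nonneg diam_nonneg zero_le_two⟩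
    (mem_image_of_mem delta0 hD)

theorem exists_mem_lt_norm_of_lt_delta0 {S : Set V} {r : ℝ} (hr : 0 ≤ r) (hrS : r < delta0 S) :
    ∃ e ∈ S, r < ‖e‖ := by
  by_contra! hS
  have hdiam : diam S ≤ 2 * r :=
    (diam_mono (fun e he => mem_closedBall_zero_iff.2 (hS e he)) isBounded_closedBall).trans
      (diam_closedBall hr)
  rw [delta0] at hrS
  linarith

theorem le_kuratowski {S : Set V} (hS : IsBounded S) {r : ℝ}
    (h : ∀ ε > 0, ∀ t : Finset V, S ⊆ ⋃ c ∈ t, closedBall c ε → r ≤ ε) : r ≤ kuratowski S := by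
  obtain ⟨R, hR⟩ := hS.subset_closedBall 0
  refine le_csInf ⟨max R 1, lt_max_of_lt_right one_pos, {0}, ?_⟩ fun ε ⟨hε, t, ht⟩ => h ε hε t ht
  simpa using hR.trans (closedBall_subset_closedBall (le_max_left R 1))

end Symmetrization

theorem le_csInf_image_add_csInf_image {α β : Type*} {f : α → ℝ} {g : β → ℝ} {s : Set α}
    {t : Set β} (hs : s.Nonempty) (ht : t.Nonempty) {c : ℝ}
    (h : ∀ a ∈ s, ∀ b ∈ t, c ≤ f a + g b) : c ≤ sInf (f '' s) + sInf (g '' t) := by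
  have hf (b : β) (hb : b ∈ t) : c - g b ≤ sInf (f '' s) :=
    le_csInf (hs.image f) (by rintro _ ⟨a, ha, rfl⟩; linarith [h a ha b hb])
  have : c - sInf (f '' s) ≤ sInf (g '' t) :=
    le_csInf (ht.image g) (by rintro _ ⟨b, hb, rfl⟩; linarith [hf b hb])
  linarith

theorem nonpos_of_bddAbove_of_forall_exists_add_le {α : Type*} {D : Set α} (hD : D.Nonempty)
    {g : α → ℝ} (hg : BddAbove (g '' D)) {δ : ℝ} (h : ∀ d ∈ D, ∃ d' ∈ D, g d + δ ≤ g d') :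
    δ ≤ 0 := by
  by_contra! hδ
  obtain ⟨_, ⟨d, hd, rfl⟩, hlt⟩ :=
    exists_lt_of_lt_csSup (hD.image g) (sub_lt_self (sSup (g '' D)) hδ)
  obtain ⟨d', hd', hle⟩ := h d hd
  linarith [le_csSup hg (mem_image_of_mem g hd')]

section FiniteCovers

variable {V : Type*} [NormedAddCommGroup V] [NormedSpace ℝ V]

theorem FiniteDimensional.exists_nonneg_midpoint_strongly_convex [FiniteDimensional ℝ V] :
    ∃ Φ : V → ℝ, (∀ z, 0 ≤ Φ z) ∧
      ∃ κ > 0, ∀ z w, Φ (midpoint ℝ z w) + κ * ‖z - w‖ ^ 2 ≤ (Φ z + Φ w) / 2 := by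
  let L := (toEuclidean : V ≃L[ℝ] EuclideanSpace ℝ (Fin (Module.finrank ℝ V)))
  obtain ⟨C, hC, hLC⟩ := L.symm.toContinuousLinearMap.bound
  refine ⟨fun z => ‖L z‖ ^ 2, fun z => by positivity, (4 * C ^ 2)⁻¹, by positivity, fun z w => ?_⟩
  have apollonius :=
    EuclideanGeometry.dist_sq_add_dist_sq_eq_two_mul_dist_midpoint_sq_add_half_dist_sq 0 (L z) (L w)
  have hmid : L (midpoint ℝ z w) = midpoint ℝ (L z) (L w) := by
    simp only [midpoint_eq_smul_add, map_smul, map_add]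
  simp only [dist_zero_left, ← hmid] at apollonius
  have hzw : ‖z - w‖ ≤ C * dist (L z) (L w) := by
    simpa [dist_eq_norm] using hLC (L (z - w))
  have : (4 * C ^ 2)⁻¹ * ‖z - w‖ ^ 2 ≤ (dist (L z) (L w) / 2) ^ 2 := by
    rw [inv_mul_le_iff₀ (by positivity)]
    nlinarith [norm_nonneg (z - w)]
  dsimp only
  linarith

theorem dist_midpoint_le_of_dist_add_le_of_dist_sub_le {d e z w : V} {ε : ℝ}
    (hz : dist (d + e) z ≤ ε) (hw : dist (d - e) w ≤ ε) : dist d (midpoint ℝ z w) ≤ ε := by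
  have := dist_midpoint_midpoint_le (d + e) (d - e) z w
  rw [midpoint_add_sub] at this
  linarith

theorem two_mul_sub_le_dist_of_dist_add_le_of_dist_sub_le {d e z w : V} {ε : ℝ}
    (hz : dist (d + e) z ≤ ε) (hw : dist (d - e) w ≤ ε) : 2 * (‖e‖ - ε) ≤ dist z w := by
  have hchord : dist (d + e) (d - e) = 2 * ‖e‖ := by
    rw [dist_eq_norm, add_sub_sub_cancel, ← two_smul ℝ, norm_smul, Real.norm_two]
  have := dist_triangle4 (d + e) z w (d - e)
  rw [dist_comm w] at this
  linarith

theorem not_subset_biUnion_closedBall_of_forall_exists_mem_symmAt {D : Set V} (hD : D.Nonempty)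
    {ε r : ℝ} (hεr : ε < r) (hchord : ∀ d ∈ D, ∃ e ∈ symmAt D d, r < ‖e‖) (t : Finset V) :
    ¬ D ⊆ ⋃ c ∈ t, closedBall c ε := by
  intro hcov
  set E := Submodule.span ℝ (t : Set V)
  obtain ⟨Φ, hΦ0, κ, hκ, hΦ⟩ := FiniteDimensional.exists_nonneg_midpoint_strongly_convex (V := E)
  have hbdd (s : Set E) : BddBelow (Φ '' s) := ⟨0, by rintro _ ⟨z, -, rfl⟩; exact hΦ0 z⟩
  let near (d : V) : Set E := {z | dist d z ≤ ε}
  let g (d : V) : ℝ := sInf (Φ '' near d)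
  have centre_mem_near {d : V} (hd : d ∈ D) :
      ∃ c : t, (⟨c, Submodule.subset_span c.2⟩ : E) ∈ near d := by
    obtain ⟨c, hc, hdc⟩ := mem_iUnion₂.1 (hcov hd)
    exact ⟨⟨c, hc⟩, hdc⟩
  have near_nonempty {d : V} (hd : d ∈ D) : (near d).Nonempty :=
    let ⟨_, hc⟩ := centre_mem_near hd; ⟨_, hc⟩
  have g_bddAbove : BddAbove (g '' D) := by
    obtain ⟨B, hB⟩ := (finite_range fun c : t => Φ ⟨c, Submodule.subset_span c.2⟩).bddAbove
    refine ⟨B, forall_mem_image.2 fun d hd => ?_⟩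
    obtain ⟨c, hc⟩ := centre_mem_near hd
    exact (csInf_le (hbdd _) (mem_image_of_mem Φ hc)).trans (hB (mem_range_self c))
  set δ := κ * (2 * (r - ε)) ^ 2
  have hδ : 0 < δ := by have := sub_pos.2 hεr; positivity
  have mid_le {d e : V} (he : r < ‖e‖) :
      ∀ z ∈ near (d + e), ∀ w ∈ near (d - e), 2 * (g d + δ) ≤ Φ z + Φ w := by
    intro z hz w hw
    have hmid : midpoint ℝ z w ∈ near d := by
      show dist d ((midpoint ℝ z w : E) : V) ≤ ε
      rw [midpoint_eq_smul_add, Submodule.coe_smul, Submodule.coe_add, ← midpoint_eq_smul_add]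
      exact dist_midpoint_le_of_dist_add_le_of_dist_sub_le hz hw
    have hsep : 2 * (r - ε) ≤ ‖z - w‖ :=
      calc 2 * (r - ε) ≤ 2 * (‖e‖ - ε) := by linarith
        _ ≤ dist (z : V) w := two_mul_sub_le_dist_of_dist_add_le_of_dist_sub_le hz hw
        _ = ‖z - w‖ := dist_eq_norm z w
    have : δ ≤ κ * ‖z - w‖ ^ 2 :=
      mul_le_mul_of_nonneg_left (pow_le_pow_left₀ (by linarith) hsep 2) hκ.le
    linarith [hΦ z w, csInf_le (hbdd _) (mem_image_of_mem Φ hmid)]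
  have step : ∀ d ∈ D, ∃ d' ∈ D, g d + δ ≤ g d' := by
    intro d hd
    obtain ⟨e, ⟨hu, hv⟩, he⟩ := hchord d hd
    have := le_csInf_image_add_csInf_image (near_nonempty hu) (near_nonempty hv) (mid_le he)
    rcases le_total (g (d + e)) (g (d - e)) with h | h
    · exact ⟨d - e, hv, by linarith⟩
    · exact ⟨d + e, hu, by linarith⟩
  exact hδ.not_ge (nonpos_of_bddAbove_of_forall_exists_add_le hD g_bddAbove step)

end FiniteCovers

/-- if `D ∈ Δ_N(A)`, then `α(D) ≥ δ_{2N}(A)`. -/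
theorem stmt3 (A : Set X) (hA : IsBounded A) (N : ℕ) (hN : 0 < N)
    (D : Set X) (hD : D ∈ DeltaFam A N) :
    deltaN A (2 * N) ≤ kuratowski D := by
  obtain ⟨x, hx, rfl⟩ := id hD
  have : Nonempty (Fin N) := ⟨⟨0, hN⟩⟩
  refine le_kuratowski (isBounded_symmSet hA x) fun ε hε t hcov => ?_
  by_contra! hlt
  obtain ⟨r, hεr, hrδ⟩ := exists_between hlt
  refine not_subset_biUnion_closedBall_of_forall_exists_mem_symmAt ⟨0, zero_mem_symmSet hx⟩ hεr
    (fun d hd => ?_) t hcov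
  exact exists_mem_lt_norm_of_lt_delta0 (hε.le.trans hεr.le)
    (hrδ.trans_le (deltaN_le_delta0 (symmAt_mem_deltaFam hD hd)))
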